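/- arXiv:2108.12974 — 4 statements merged into one kernel-verified Lean document; each statement's English description precedes it below -/
import Mathlib

section
/- Let $0<p<q<\infty$ and let $(\lambda_k)_{k\in\mathbb{N}}$ be a positive non-increasing sequence. Assume $m_0>n$ is an integer such that $\frac{m_0-n}{(\sum_{k=1}^{m_0}\lambda_k^{-p})^{q/p}}\geq \frac{m_0+1-n}{(\sum_{k=1}^{m_0+1}\lambda_k^{-p})^{q/p}}$. Then also $\frac{m_0+1-n}{(\sum_{k=1}^{m_0+1}\lambda_k^{-p})^{q/p}}\geq \frac{m_0+2-n}{(\sum_{k=1}^{m_0+2}\lambda_k^{-p})^{q/p}}$. -/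
/-!
Write `Dₘ = (∑_{k ≤ m} λ_k^{-p})^{q/p}`. The partial sums grow by the non-decreasing increments
`λ_k^{-p}` and `t ↦ t^{q/p}` is convex and increasing, so `Dₘ` has non-decreasing increments.
For such a sequence, `(M + 1) / D₁ ≤ M / D₀` says `D₀ ≤ M (D₁ - D₀)`, and then
`D₁ ≤ (M + 1) (D₁ - D₀) ≤ (M + 1) (D₂ - D₁)`, which is the next step `(M + 2) / D₂ ≤ (M + 1) / D₁`.
-/

open Finset Set

lemma add_two_div_le_add_one_div {M D₀ D₁ D₂ : ℝ} (hM : 0 ≤ M + 1)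
    (hD₀ : 0 < D₀) (hD₁ : 0 < D₁) (hD₂ : 0 < D₂) (hD : D₁ - D₀ ≤ D₂ - D₁)
    (h : (M + 1) / D₁ ≤ M / D₀) :
    (M + 2) / D₂ ≤ (M + 1) / D₁ := by
  rw [div_le_div_iff₀ hD₁ hD₀] at h
  rw [div_le_div_iff₀ hD₂ hD₁]
  nlinarith [mul_le_mul_of_nonneg_left hD hM]

lemma ConvexOn.sub_le_sub_of_monotoneOn {f : ℝ → ℝ} {a x h k : ℝ}
    (hf : ConvexOn ℝ (Ici a) f) (hf' : MonotoneOn f (Ici a))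
    (hx : a ≤ x) (hh : 0 ≤ h) (hhk : h ≤ k) :
    f (x + h) - f x ≤ f (x + h + k) - f (x + h) := by
  have hmid : f (x + h) ≤ (1 / 2) * f x + (1 / 2) * f (x + 2 * h) := by
    have := hf.2 (mem_Ici.2 hx) (mem_Ici.2 (by linarith : a ≤ x + 2 * h))
      (by norm_num : (0 : ℝ) ≤ 1 / 2) (by norm_num : (0 : ℝ) ≤ 1 / 2) (by norm_num)
    simpa only [smul_eq_mul, show 1 / 2 * x + 1 / 2 * (x + 2 * h) = x + h by ring] using this
  have hmono : f (x + 2 * h) ≤ f (x + h + k) :=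
    hf' (mem_Ici.2 (by linarith)) (mem_Ici.2 (by linarith)) (by linarith)
  linarith

theorem ratio_stays_nonincreasing_general
    (p q : ℝ) (hp : 0 < p) (hpq : p < q) (l : ℕ → ℝ) (hl : ∀ k, 0 < l k)
    (hmono : Antitone l) (n m₀ : ℕ) (h : n < m₀)
    (hyp : ((m₀ : ℝ) + 1 - n) / (∑ k ∈ Finset.Icc 1 (m₀ + 1), l k ^ (-p)) ^ (q / p) ≤
        ((m₀ : ℝ) - n) / (∑ k ∈ Finset.Icc 1 m₀, l k ^ (-p)) ^ (q / p)) :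
    ((m₀ : ℝ) + 2 - n) / (∑ k ∈ Finset.Icc 1 (m₀ + 2), l k ^ (-p)) ^ (q / p) ≤
      ((m₀ : ℝ) + 1 - n) / (∑ k ∈ Finset.Icc 1 (m₀ + 1), l k ^ (-p)) ^ (q / p) := by
  set S := ∑ k ∈ Finset.Icc 1 m₀, l k ^ (-p)
  have hr : 1 ≤ q / p := (one_le_div hp).2 hpq.le
  have hS : 0 < S := sum_pos (fun k _ ↦ Real.rpow_pos_of_pos (hl k) _) ⟨1, mem_Icc.2 ⟨le_rfl, by omega⟩⟩
  have hA : 0 < l (m₀ + 1) ^ (-p) := Real.rpow_pos_of_pos (hl _) _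
  have hB : 0 < l (m₀ + 2) ^ (-p) := Real.rpow_pos_of_pos (hl _) _
  have hAB : l (m₀ + 1) ^ (-p) ≤ l (m₀ + 2) ^ (-p) :=
    Real.rpow_le_rpow_of_nonpos (hl _) (hmono (by omega)) (by linarith)
  have hincr := (convexOn_rpow hr).sub_le_sub_of_monotoneOn
    (Real.monotoneOn_rpow_Ici_of_exponent_nonneg (by linarith)) hS.le hA.le hAB
  rw [sum_Icc_succ_top (by omega : 1 ≤ m₀ + 1)] at hyp ⊢
  rw [show m₀ + 2 = m₀ + 1 + 1 from rfl, sum_Icc_succ_top (by omega : 1 ≤ m₀ + 1 + 1),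
    sum_Icc_succ_top (by omega : 1 ≤ m₀ + 1)]
  rw [show (m₀ : ℝ) + 1 - n = m₀ - n + 1 by ring] at hyp ⊢
  rw [show (m₀ : ℝ) + 2 - n = m₀ - n + 2 by ring]
  have hnm : (n : ℝ) < m₀ := by exact_mod_cast h
  exact add_two_div_le_add_one_div (by linarith) (Real.rpow_pos_of_pos hS _)
    (Real.rpow_pos_of_pos (by linarith) _) (Real.rpow_pos_of_pos (by linarith) _) hincr hyp

/-- if the sequence `m ↦ (m-n)/(∑_{k=1}^m λ_k^{-p})^{q/p}` is non-increasing
at the step `m₀ → m₀+1`, it is non-increasing at the next step as well. -/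
theorem ratio_stays_nonincreasing
    (p q : ℝ) (hp : 0 < p) (hpq : p < q) (l : ℕ → ℝ) (hl : ∀ k, 0 < l k)
    (hmono : Antitone l) (n m₀ : ℕ) (hn : 1 ≤ n) (h : n < m₀)
    (hyp : ((m₀ : ℝ) + 1 - n) / (∑ k ∈ Finset.Icc 1 (m₀ + 1), l k ^ (-p)) ^ (q / p) ≤
        ((m₀ : ℝ) - n) / (∑ k ∈ Finset.Icc 1 m₀, l k ^ (-p)) ^ (q / p)) :
    ((m₀ : ℝ) + 2 - n) / (∑ k ∈ Finset.Icc 1 (m₀ + 2), l k ^ (-p)) ^ (q / p) ≤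
      ((m₀ : ℝ) + 1 - n) / (∑ k ∈ Finset.Icc 1 (m₀ + 1), l k ^ (-p)) ^ (q / p) :=
  ratio_stays_nonincreasing_general p q hp hpq l hl hmono n m₀ h hyp
end

section
/- Let $0<p<q=\infty$ and $\lambda=(\lambda_k)_{k\in\mathbb{N}}$ a positive non-increasing sequence. Then for every $n\in\mathbb{N}$, $\sigma_n(T_\lambda:\ell_p(\mathbb{N})\to\ell_\infty(\mathbb{N}),\mathcal{E}) = \left(\sum_{k=1}^{n+1}\lambda_k^{-p}\right)^{-1/p}$. -/
/-! If `‖ξ‖_p ≤ 1`, at most `n` coordinates satisfy `λ_k |ξ_k| > c := (∑_{k ≤ n} λ_k^{-p})^{-1/p}`: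
each of them costs `|ξ_k|^p > c^p λ_k^{-p}`, and as `λ_k^{-p}` increases, `n + 1` of them would cost
more than `c^p ∑_{k ≤ n} λ_k^{-p} = 1`. Putting them into `Γ` leaves a supremum `≤ c`. Conversely,
`ξ_k = c / λ_k` for `k ≤ n` (and `0` beyond) is a unit vector with `λ_k ξ_k = c` on `n + 1`
coordinates, one of which escapes any `Γ` of size `n`. -/

/-- Best `n`-term approximation width of the diagonal operator
`T_λ : ℓ_p → ℓ_∞` with respect to the canonical basis dictionary:
`σ_n = sup_{‖ξ‖_p ≤ 1} inf_{|Γ| = n} sup_{k ∉ Γ} |λ_k ξ_k|`.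
Sequences are indexed by `ℕ = {0, 1, 2, …}` (so `λ_1` corresponds to `l 0`, etc.). -/
noncomputable def sigmaWInf (p : ℝ) (l : ℕ → ℝ) (n : ℕ) : ℝ :=
  sSup { s : ℝ | ∃ ξ : ℕ → ℂ,
    Summable (fun k => ‖ξ k‖ ^ p) ∧ (∑' k, ‖ξ k‖ ^ p) ≤ 1 ∧
    s = sInf { t : ℝ | ∃ Γ : Finset ℕ, Γ.card = n ∧
      t = ⨆ k : { k : ℕ // k ∉ Γ }, ‖(l (k : ℕ) : ℂ) * ξ (k : ℕ)‖ } }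

open Finset

theorem Finset.sum_range_card_le_sum_of_monotone {M : Type*} [AddCommMonoid M] [PartialOrder M]
    [IsOrderedAddMonoid M] {f : ℕ → M} (hf : Monotone f) (F : Finset ℕ) :
    ∑ i ∈ range #F, f i ≤ ∑ i ∈ F, f i := by
  induction F using Finset.induction_on_max with
  | empty => simp
  | insert a s hlt ih =>
    have has : a ∉ s := fun h => lt_irrefl a (hlt a h)
    have hcard : #s ≤ a := by
      simpa using card_le_card (fun x hx => mem_range.2 (hlt x hx) : s ⊆ range a)
    rw [card_insert_of_notMem has, sum_range_succ, sum_insert has, add_comm]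
    exact add_le_add (hf hcard) ih

theorem card_le_of_forall_lt_of_tsum_le {w x : ℕ → ℝ} {n : ℕ} (hw : Monotone w)
    (hx0 : ∀ k, 0 ≤ x k) (hx : Summable x) (hxw : ∑' k, x k ≤ ∑ k ∈ range (n + 1), w k)
    {F : Finset ℕ} (hF : ∀ k ∈ F, w k < x k) : #F ≤ n := by
  by_contra! hn
  obtain ⟨G, hGF, hG⟩ := exists_subset_card_eq (show n + 1 ≤ #F from hn)
  have hGne : G.Nonempty := card_pos.1 (by omega)
  have := calc ∑ k ∈ range (n + 1), w k
      _ = ∑ k ∈ range #G, w k := by rw [hG]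
      _ ≤ ∑ k ∈ G, w k := sum_range_card_le_sum_of_monotone hw G
      _ < ∑ k ∈ G, x k := sum_lt_sum_of_nonempty hGne fun k hk => hF k (hGF hk)
      _ ≤ ∑' k, x k := hx.sum_le_tsum G fun k _ => hx0 k
  linarith

/-- The error of the best `n`-term approximation of `a` in `ℓ_∞` by the canonical basis. -/
noncomputable def bestNTermError (a : ℕ → ℝ) (n : ℕ) : ℝ :=
  sInf {t : ℝ | ∃ Γ : Finset ℕ, #Γ = n ∧ t = ⨆ k : {k : ℕ // k ∉ Γ}, a k}

theorem bestNTermError_le_of_card_le {a : ℕ → ℝ} {n : ℕ} {c : ℝ} (ha : ∀ k, 0 ≤ a k)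
    (hc : 0 ≤ c) (h : ∀ F : Finset ℕ, (∀ k ∈ F, c < a k) → #F ≤ n) :
    bestNTermError a n ≤ c := by
  have hfin : {k | c < a k}.Finite := by
    by_contra hinf
    obtain ⟨F, hF, hFcard⟩ := Set.Infinite.exists_subset_card_eq hinf (n + 1)
    have := h F fun k hk => hF hk
    omega
  obtain ⟨Γ, hΓ, hΓcard⟩ := Infinite.exists_superset_card_eq hfin.toFinset n (h _ (by simp))
  refine csInf_le_of_le ?_ ⟨Γ, hΓcard, rfl⟩ (Real.iSup_le (fun k => ?_) hc)
  · exact ⟨0, by rintro t ⟨_, _, rfl⟩; exact Real.iSup_nonneg fun k => ha k⟩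
  · exact not_lt.1 fun hk => k.2 (hΓ (by simpa using hk))

theorem le_bestNTermError {a : ℕ → ℝ} {n : ℕ} {c : ℝ} (ha : BddAbove (Set.range a))
    (h : ∀ Γ : Finset ℕ, #Γ = n → ∃ k ∉ Γ, c ≤ a k) : c ≤ bestNTermError a n := by
  refine le_csInf ⟨_, range n, card_range n, rfl⟩ ?_
  rintro t ⟨Γ, hΓ, rfl⟩
  obtain ⟨k, hk, hck⟩ := h Γ hΓ
  exact le_ciSup_of_le (ha.mono (Set.range_comp_subset_range Subtype.val a)) ⟨k, hk⟩ hck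

theorem sum_div_rpow_eq_one {p : ℝ} (hp : p ≠ 0) {l : ℕ → ℝ} (hl : ∀ k, 0 < l k)
    {s : Finset ℕ} (hs : s.Nonempty) :
    ∑ k ∈ s, ((∑ j ∈ s, l j ^ (-p)) ^ (-(1 / p)) / l k) ^ p = 1 := by
  set S := ∑ j ∈ s, l j ^ (-p)
  have hS : 0 < S := sum_pos (fun k _ => Real.rpow_pos_of_pos (hl k) _) hs
  have hcp : (S ^ (-(1 / p))) ^ p = S⁻¹ := by
    rw [← Real.rpow_mul hS.le, neg_mul, one_div, inv_mul_cancel₀ hp, Real.rpow_neg_one]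
  calc ∑ k ∈ s, (S ^ (-(1 / p)) / l k) ^ p
      _ = ∑ k ∈ s, S⁻¹ * l k ^ (-p) := sum_congr rfl fun k _ => by
        rw [Real.div_rpow (Real.rpow_nonneg hS.le _) (hl k).le, hcp, Real.rpow_neg (hl k).le,
          div_eq_mul_inv]
      _ = 1 := by rw [← mul_sum, inv_mul_cancel₀ hS.ne']

section Diagonal

variable {p : ℝ} {l : ℕ → ℝ} {n : ℕ} {c : ℝ}

/-- `c < l k * x k` iff `(c / l k) ^ p < x k ^ p`, so `(c / l k) ^ p` are the weights to compare
`x ^ p` with. -/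
theorem bestNTermError_le_of_tsum_le (hp : 0 < p) (hl : ∀ k, 0 < l k) (hmono : Antitone l)
    (hc : 0 ≤ c) (hcS : ∑ k ∈ range (n + 1), (c / l k) ^ p = 1) {x : ℕ → ℝ}
    (hx0 : ∀ k, 0 ≤ x k) (hx : Summable fun k => x k ^ p) (hx1 : ∑' k, x k ^ p ≤ 1) :
    bestNTermError (fun k => l k * x k) n ≤ c := by
  have hw : Monotone fun k => (c / l k) ^ p := fun a b hab =>
    Real.rpow_le_rpow (div_nonneg hc (hl a).le) (div_le_div_of_nonneg_left hc (hl b) (hmono hab))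
      hp.le
  refine bestNTermError_le_of_card_le (fun k => mul_nonneg (hl k).le (hx0 k)) hc fun F hF => ?_
  refine card_le_of_forall_lt_of_tsum_le hw (fun k => Real.rpow_nonneg (hx0 k) p) hx
    (hcS ▸ hx1) fun k hk => ?_
  exact Real.rpow_lt_rpow (div_nonneg hc (hl k).le) ((div_lt_iff₀' (hl k)).2 (hF k hk)) hp

theorem exists_le_bestNTermError (hp : 0 < p) (hl : ∀ k, 0 < l k) (hc : 0 ≤ c)
    (hcS : ∑ k ∈ range (n + 1), (c / l k) ^ p = 1) :
    ∃ x : ℕ → ℝ, (∀ k, 0 ≤ x k) ∧ Summable (fun k => x k ^ p) ∧ ∑' k, x k ^ p = 1 ∧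
      c ≤ bestNTermError (fun k => l k * x k) n := by
  set x : ℕ → ℝ := fun k => if k ∈ range (n + 1) then c / l k else 0 with hx
  have hzero : ∀ k ∉ range (n + 1), x k ^ p = 0 := fun k hk => by
    simp only [hx, if_neg hk, Real.zero_rpow hp.ne']
  have hlx : ∀ k, l k * x k = if k ∈ range (n + 1) then c else 0 := fun k => by
    split_ifs with hk
    · simp only [hx, if_pos hk, mul_div_cancel₀ _ (hl k).ne']
    · simp only [hx, if_neg hk, mul_zero]
  refine ⟨x, fun k => ?_, summable_of_ne_finset_zero hzero, ?_, le_bestNTermError ?_ ?_⟩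
  · simp only [hx]
    split_ifs
    exacts [div_nonneg hc (hl k).le, le_rfl]
  · rw [tsum_eq_sum hzero, ← hcS]
    exact sum_congr rfl fun k hk => by simp only [hx, if_pos hk]
  · refine ⟨c, ?_⟩
    rintro _ ⟨k, rfl⟩
    simp only [hlx]
    split_ifs
    exacts [le_rfl, hc]
  · intro Γ hΓ
    obtain ⟨k, hk, hkΓ⟩ := exists_mem_notMem_of_card_lt_card (s := Γ) (t := range (n + 1))
      (by simp [hΓ])
    exact ⟨k, hkΓ, by simp [hlx, hk]⟩

/-- `sigmaWInf` only sees `‖ξ‖`, so it is determined by nonnegative real sequences. -/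
theorem sigmaWInf_eq_of_forall_le_of_exists_le (hl : ∀ k, 0 ≤ l k)
    (hle : ∀ x : ℕ → ℝ, (∀ k, 0 ≤ x k) → Summable (fun k => x k ^ p) → ∑' k, x k ^ p ≤ 1 →
      bestNTermError (fun k => l k * x k) n ≤ c)
    (hge : ∃ x : ℕ → ℝ, (∀ k, 0 ≤ x k) ∧ Summable (fun k => x k ^ p) ∧ ∑' k, x k ^ p ≤ 1 ∧
      c ≤ bestNTermError (fun k => l k * x k) n) :
    sigmaWInf p l n = c := by
  have hnorm : ∀ ξ : ℕ → ℂ, (fun k => ‖(l k : ℂ) * ξ k‖) = fun k => l k * ‖ξ k‖ := fun ξ => by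
    simp only [norm_mul, Complex.norm_real, Real.norm_of_nonneg (hl _)]
  obtain ⟨x, hx0, hx, hx1, hcx⟩ := hge
  have hxnorm : ∀ k, ‖(x k : ℂ)‖ = x k := fun k => by simp [hx0 k]
  set s₀ := bestNTermError (fun k => ‖(l k : ℂ) * (x k : ℂ)‖) n
  refine le_antisymm (csSup_le ⟨s₀, ?mem⟩ ?upper) (le_csSup_of_le ⟨c, ?upper⟩ ?mem ?_)
  case upper =>
    rintro s ⟨ξ, hξ, hξ1, rfl⟩
    change bestNTermError (fun k => ‖(l k : ℂ) * ξ k‖) n ≤ c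
    rw [hnorm]
    exact hle _ (fun k => norm_nonneg _) hξ hξ1
  case mem =>
    exact ⟨fun k => x k, by simpa only [hxnorm] using hx, by simpa only [hxnorm] using hx1, rfl⟩
  simpa only [s₀, hnorm (fun k => x k), hxnorm] using hcx

end Diagonal

/-- for `0 < p < q = ∞` and a positive non-increasing `λ`,
`σ_n(T_λ : ℓ_p → ℓ_∞, 𝓔) = (∑_{k=1}^{n+1} λ_k^{-p})^{-1/p}`. -/
theorem sigma_diagonal_q_infty
    (p : ℝ) (hp : 0 < p) (l : ℕ → ℝ) (hl : ∀ k, 0 < l k)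
    (hmono : Antitone l) (n : ℕ) :
    sigmaWInf p l n = (∑ k ∈ Finset.range (n + 1), l k ^ (-p)) ^ (-(1 / p)) := by
  set c := (∑ k ∈ range (n + 1), l k ^ (-p)) ^ (-(1 / p))
  have hc : 0 ≤ c := Real.rpow_nonneg (sum_nonneg fun k _ => (Real.rpow_pos_of_pos (hl k) _).le) _
  have hcS : ∑ k ∈ range (n + 1), (c / l k) ^ p = 1 :=
    sum_div_rpow_eq_one hp.ne' hl nonempty_range_add_one
  obtain ⟨x, hx0, hx, hx1, hcx⟩ := exists_le_bestNTermError hp hl hc hcS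
  exact sigmaWInf_eq_of_forall_le_of_exists_le (fun k => (hl k).le)
    (fun _ => bestNTermError_le_of_tsum_le hp hl hmono hc hcS) ⟨x, hx0, hx, hx1.le, hcx⟩
end

section
/- Let $0<q<\infty$ and let $\lambda=(\lambda_k)_{k\in\mathbb{N}}$ be a positive non-increasing sequence with $\sum_{k=1}^\infty \lambda_k^q<\infty$. Then for the diagonal operator $T_\lambda:\ell_\infty(\mathbb{N})\to\ell_q(\mathbb{N})$ and every $n\in\mathbb{N}$, $\sigma_n(T_\lambda,\mathcal{E})=\left(\sum_{k=n+1}^\infty \lambda_k^q\right)^{1/q}$. -/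
/-!
Since `λ` is non-increasing, any `n` indices carry at most the mass `∑_{k<n} λ_k^q` of the
first `n` (exchange the indices of `Γ` beyond `n` for the missing ones below `n`), so for
`ξ ≡ 1` the best choice is `Γ = {0, …, n-1}` and the error is the tail. For any other
`‖ξ‖_∞ ≤ 1`, the same `Γ` already gives an error at most that tail, because `|λ_k ξ_k| ≤ λ_k`.
-/

/-- Best `n`-term approximation width of the diagonal operator
`T_λ : ℓ_∞ → ℓ_q` (`0 < q < ∞`) with respect to the canonical basis dictionary:
`σ_n = sup_{‖ξ‖_∞ ≤ 1} inf_{|Γ| = n} (∑_{k ∉ Γ} |λ_k ξ_k|^q)^{1/q}`.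
Sequences are indexed by `ℕ = {0, 1, 2, …}` (so `λ_1` corresponds to `l 0`, etc.). -/
noncomputable def sigmaInfQ (q : ℝ) (l : ℕ → ℝ) (n : ℕ) : ℝ :=
  sSup { s : ℝ | ∃ ξ : ℕ → ℂ, (∀ k, ‖ξ k‖ ≤ 1) ∧
    s = sInf { t : ℝ | ∃ Γ : Finset ℕ, Γ.card = n ∧
      t = (∑' k : ℕ, if k ∈ Γ then 0 else ‖(l k : ℂ) * ξ k‖ ^ q) ^ (1 / q) } }

open Finset

theorem Finset.sum_le_sum_range_card_of_antitone {M : Type*} [AddCommMonoid M] [PartialOrder M]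
    [IsOrderedAddMonoid M] {f : ℕ → M} (hf : Antitone f) (Γ : Finset ℕ) :
    ∑ k ∈ Γ, f k ≤ ∑ k ∈ range #Γ, f k := by
  set n := #Γ
  rw [← sum_inter_add_sum_sdiff Γ (range n), ← sum_inter_add_sum_sdiff (range n) Γ, inter_comm]
  gcongr _ + ?_
  have hcard : #(Γ \ range n) = #(range n \ Γ) := by
    have h1 := card_sdiff_add_card_inter Γ (range n)
    have h2 := card_sdiff_add_card_inter (range n) Γ
    rw [card_range, inter_comm] at h2
    omega
  calc ∑ k ∈ Γ \ range n, f k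
      ≤ #(Γ \ range n) • f n :=
        sum_le_card_nsmul _ _ _ fun k hk => hf (by simpa using (mem_sdiff.mp hk).2)
    _ = #(range n \ Γ) • f n := by rw [hcard]
    _ ≤ ∑ k ∈ range n \ Γ, f k :=
        card_nsmul_le_sum _ _ _ fun k hk => hf (mem_range.mp (mem_sdiff.mp hk).1).le

theorem tsum_ite_mem_eq_tsum_sub_sum {β α : Type*} [DecidableEq β] [AddCommGroup α]
    [TopologicalSpace α] [IsTopologicalAddGroup α] [T2Space α] {f : β → α} (hf : Summable f)
    (Γ : Finset β) : ∑' k, (if k ∈ Γ then 0 else f k) = ∑' k, f k - ∑ k ∈ Γ, f k := by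
  rw [← hf.sum_add_tsum_compl (s := Γ), _root_.tsum_subtype, add_sub_cancel_left]
  congr! 1 with k
  simp [Set.indicator_apply, ite_not]

theorem tsum_ite_mem_range {f : ℕ → ℝ} (hf : Summable f) (n : ℕ) :
    ∑' k, (if k ∈ range n then 0 else f k) = ∑' k, f (k + n) := by
  rw [tsum_ite_mem_eq_tsum_sub_sum hf, ← hf.sum_add_tsum_nat_add n, add_sub_cancel_left]

theorem tsum_nat_add_card_le_tsum_ite {f : ℕ → ℝ} (hf : Antitone f) (hs : Summable f)
    (Γ : Finset ℕ) : ∑' k, f (k + #Γ) ≤ ∑' k, (if k ∈ Γ then 0 else f k) := by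
  rw [tsum_ite_mem_eq_tsum_sub_sum hs, ← hs.sum_add_tsum_nat_add #Γ]
  linarith [sum_le_sum_range_card_of_antitone hf Γ]

def nTermErrors (q : ℝ) (f : ℕ → ℝ) (n : ℕ) : Set ℝ :=
  {t | ∃ Γ : Finset ℕ, #Γ = n ∧ t = (∑' k, if k ∈ Γ then 0 else f k) ^ (1 / q)}

section nTermErrors

variable {q : ℝ} {f : ℕ → ℝ} {n : ℕ}

theorem bddBelow_nTermErrors (hf : ∀ k, 0 ≤ f k) : BddBelow (nTermErrors q f n) := by
  refine ⟨0, ?_⟩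
  rintro t ⟨Γ, -, rfl⟩
  exact Real.rpow_nonneg (tsum_nonneg fun k => by split_ifs <;> simp [hf]) _

theorem sInf_nTermErrors_le {g : ℕ → ℝ} (hq : 0 < q) (hf : ∀ k, 0 ≤ f k) (hfg : f ≤ g)
    (hg : Summable g) : sInf (nTermErrors q f n) ≤ (∑' k, g (k + n)) ^ (1 / q) := by
  have hsf : Summable f := hg.of_nonneg_of_le hf hfg
  refine (csInf_le (bddBelow_nTermErrors hf) ⟨range n, card_range n, rfl⟩).trans ?_
  rw [tsum_ite_mem_range hsf]
  refine Real.rpow_le_rpow (tsum_nonneg fun k => hf _) ?_ (by positivity)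
  exact ((summable_nat_add_iff n).mpr hsf).tsum_le_tsum (fun k => hfg _)
    ((summable_nat_add_iff n).mpr hg)

theorem isLeast_nTermErrors (hq : 0 < q) (hf : ∀ k, 0 ≤ f k) (hanti : Antitone f)
    (hs : Summable f) : IsLeast (nTermErrors q f n) ((∑' k, f (k + n)) ^ (1 / q)) := by
  refine ⟨⟨range n, card_range n, by rw [tsum_ite_mem_range hs]⟩, ?_⟩
  rintro t ⟨Γ, rfl, rfl⟩
  exact Real.rpow_le_rpow (tsum_nonneg fun k => hf _)
    (tsum_nat_add_card_le_tsum_ite hanti hs Γ) (by positivity)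

end nTermErrors

/-- for `0 < q < p = ∞` and a positive non-increasing `λ` with
`∑ λ_k^q < ∞`, `σ_n(T_λ : ℓ_∞ → ℓ_q, 𝓔) = (∑_{k=n+1}^∞ λ_k^q)^{1/q}`. -/
theorem sigma_diagonal_p_infty
    (q : ℝ) (hq : 0 < q) (l : ℕ → ℝ) (hl : ∀ k, 0 < l k)
    (hmono : Antitone l) (hsum : Summable fun k => l k ^ q) (n : ℕ) :
    sigmaInfQ q l n = (∑' k : ℕ, l (k + n) ^ q) ^ (1 / q) := by
  have hpow_nonneg : ∀ k, 0 ≤ l k ^ q := fun k => Real.rpow_nonneg (hl k).le q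
  have hpow_anti : Antitone fun k => l k ^ q := fun i j hij =>
    Real.rpow_le_rpow (hl j).le (hmono hij) hq.le
  have hnorm (ξ : ℕ → ℂ) (k : ℕ) : ‖(l k : ℂ) * ξ k‖ = l k * ‖ξ k‖ := by
    rw [norm_mul, Complex.norm_real, Real.norm_of_nonneg (hl k).le]
  refine IsGreatest.csSup_eq ⟨⟨1, fun k => by simp, ?_⟩, ?_⟩
  · have hone : (fun k => ‖(l k : ℂ) * (1 : ℕ → ℂ) k‖ ^ q) = fun k => l k ^ q := by
      simp [abs_of_pos (hl _)]
    change _ = sInf (nTermErrors q (fun k => ‖(l k : ℂ) * (1 : ℕ → ℂ) k‖ ^ q) n)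
    rw [hone, (isLeast_nTermErrors hq hpow_nonneg hpow_anti hsum).csInf_eq]
  · rintro s ⟨ξ, hξ, rfl⟩
    refine sInf_nTermErrors_le hq (fun k => by positivity) (fun k => ?_) hsum
    rw [hnorm]
    exact Real.rpow_le_rpow (mul_nonneg (hl k).le (norm_nonneg _))
      (mul_le_of_le_one_right (hl k).le (hξ k)) hq.le
end

section
/- Let $\lambda=(\lambda_k)_{k\in\mathbb{N}}$ be a positive non-increasing sequence. Then for the diagonal operator $T_\lambda:\ell_\infty(\mathbb{N})\to\ell_\infty(\mathbb{N})$ and every $n\in\mathbb{N}$, $\sigma_n(T_\lambda,\mathcal{E})=\lambda_{n+1}$. -/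
/-- Best `n`-term approximation width of the diagonal operator
`T_λ : ℓ_∞ → ℓ_∞` with respect to the canonical basis dictionary:
`σ_n = sup_{‖ξ‖_∞ ≤ 1} inf_{|Γ| = n} sup_{k ∉ Γ} |λ_k ξ_k|`.
Sequences are indexed by `ℕ = {0, 1, 2, …}` (so `λ_{n+1}` corresponds to `l n`). -/
noncomputable def sigmaInfInf (l : ℕ → ℝ) (n : ℕ) : ℝ :=
  sSup { s : ℝ | ∃ ξ : ℕ → ℂ, (∀ k, ‖ξ k‖ ≤ 1) ∧
    s = sInf { t : ℝ | ∃ Γ : Finset ℕ, Γ.card = n ∧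
      t = ⨆ k : { k : ℕ // k ∉ Γ }, ‖(l (k : ℕ) : ℂ) * ξ (k : ℕ)‖ } }

/-- for `p = q = ∞` and a positive non-increasing `λ`,
`σ_n(T_λ : ℓ_∞ → ℓ_∞, 𝓔) = λ_{n+1}`. -/
theorem sigma_diagonal_infty_infty
    (l : ℕ → ℝ) (hl : ∀ k, 0 < l k) (hmono : Antitone l) (n : ℕ) :
    sigmaInfInf l n = l n := by
  have hnorm : ∀ (ξ : ℕ → ℂ), (∀ k, ‖ξ k‖ ≤ 1) → ∀ k, ‖(l k : ℂ) * ξ k‖ ≤ l k := by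
    intro ξ hξ k
    rw [norm_mul, Complex.norm_real, Real.norm_of_nonneg (hl k).le]
    calc l k * ‖ξ k‖ ≤ l k * 1 := mul_le_mul_of_nonneg_left (hξ k) (hl k).le
      _ = l k := mul_one _
  have hne : ∀ Γ : Finset ℕ, Nonempty {k : ℕ // k ∉ Γ} := by
    intro Γ
    obtain ⟨k, hk⟩ := Infinite.exists_notMem_finset Γ
    exact ⟨⟨k, hk⟩⟩
  have hbdd : ∀ (ξ : ℕ → ℂ), (∀ k, ‖ξ k‖ ≤ 1) → ∀ Γ : Finset ℕ,
      BddAbove (Set.range fun k : {k : ℕ // k ∉ Γ} => ‖(l (k:ℕ) : ℂ) * ξ (k:ℕ)‖) := by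
    intro ξ hξ Γ
    exact ⟨l 0, by rintro x ⟨k, rfl⟩; exact (hnorm ξ hξ k).trans (hmono (Nat.zero_le _))⟩
  -- every element of the inner set is nonnegative
  have hT_nonneg : ∀ (ξ : ℕ → ℂ), (∀ k, ‖ξ k‖ ≤ 1) →
      ∀ t ∈ { t : ℝ | ∃ Γ : Finset ℕ, Γ.card = n ∧
        t = ⨆ k : { k : ℕ // k ∉ Γ }, ‖(l (k:ℕ) : ℂ) * ξ (k:ℕ)‖ }, (0:ℝ) ≤ t := by
    rintro ξ hξ t ⟨Γ, hΓ, rfl⟩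
    haveI := hne Γ
    obtain ⟨k⟩ := hne Γ
    exact le_trans (norm_nonneg _) (le_ciSup (hbdd ξ hξ Γ) k)
  -- with Γ = range n, the sup is at most l n
  have hmem_le : ∀ (ξ : ℕ → ℂ) (hξ : ∀ k, ‖ξ k‖ ≤ 1),
      (⨆ k : { k : ℕ // k ∉ Finset.range n }, ‖(l (k:ℕ) : ℂ) * ξ (k:ℕ)‖) ≤ l n := by
    intro ξ hξ
    haveI := hne (Finset.range n)
    refine ciSup_le fun k => (hnorm ξ hξ k).trans (hmono ?_)
    exact Nat.le_of_not_lt (by simpa [Finset.mem_range] using k.2)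
  have hub : ∀ s ∈ { s : ℝ | ∃ ξ : ℕ → ℂ, (∀ k, ‖ξ k‖ ≤ 1) ∧
      s = sInf { t : ℝ | ∃ Γ : Finset ℕ, Γ.card = n ∧
        t = ⨆ k : { k : ℕ // k ∉ Γ }, ‖(l (k:ℕ) : ℂ) * ξ (k:ℕ)‖ } }, s ≤ l n := by
    rintro s ⟨ξ, hξ, rfl⟩
    refine csInf_le_of_le ⟨0, fun t ht => hT_nonneg ξ hξ t ht⟩
      ⟨Finset.range n, Finset.card_range n, rfl⟩ (hmem_le ξ hξ)
  -- the constant-1 sequence witnesses the value l n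
  set ξ₁ : ℕ → ℂ := fun _ => 1 with hξ₁def
  have hξ₁ : ∀ k, ‖ξ₁ k‖ ≤ 1 := fun k => by simp [ξ₁]
  have hval : ∀ k, ‖(l k : ℂ) * ξ₁ k‖ = l k := by
    intro k
    simp only [ξ₁, mul_one, Complex.norm_real]
    exact Real.norm_of_nonneg (hl k).le
  have hmem1 : sInf { t : ℝ | ∃ Γ : Finset ℕ, Γ.card = n ∧
      t = ⨆ k : { k : ℕ // k ∉ Γ }, ‖(l (k:ℕ) : ℂ) * ξ₁ (k:ℕ)‖ } = l n := by
    apply le_antisymm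
    · refine csInf_le_of_le ⟨0, fun t ht => hT_nonneg ξ₁ hξ₁ t ht⟩
        ⟨Finset.range n, Finset.card_range n, rfl⟩ (hmem_le ξ₁ hξ₁)
    · refine le_csInf ⟨_, ⟨Finset.range n, Finset.card_range n, rfl⟩⟩ ?_
      rintro t ⟨Γ, hΓ, rfl⟩
      -- there is k ≤ n with k ∉ Γ
      obtain ⟨k, hkmem, hk⟩ : ∃ k ∈ Finset.range (n+1), k ∉ Γ := by
        by_contra h
        push_neg at h
        have hsub : Finset.range (n+1) ⊆ Γ := fun x hx => h x hx
        have := Finset.card_le_card hsub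
        simp [hΓ, Finset.card_range] at this
      have hkn : k ≤ n := Nat.lt_succ_iff.mp (Finset.mem_range.mp hkmem)
      calc l n ≤ l k := hmono hkn
        _ = ‖(l k : ℂ) * ξ₁ k‖ := (hval k).symm
        _ ≤ _ := le_ciSup (hbdd ξ₁ hξ₁ Γ) ⟨k, hk⟩
  have hmemS : l n ∈ { s : ℝ | ∃ ξ : ℕ → ℂ, (∀ k, ‖ξ k‖ ≤ 1) ∧
      s = sInf { t : ℝ | ∃ Γ : Finset ℕ, Γ.card = n ∧
        t = ⨆ k : { k : ℕ // k ∉ Γ }, ‖(l (k:ℕ) : ℂ) * ξ (k:ℕ)‖ } } :=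
    ⟨ξ₁, hξ₁, hmem1.symm⟩
  unfold sigmaInfInf
  exact le_antisymm (csSup_le ⟨_, hmemS⟩ hub) (le_csSup ⟨l n, hub⟩ hmemS)
end
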